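/- For λ > 0 and C > 0, define f_C(r) = r^{-1/2}(λ+r²)^{-1/8}(C - ∫₀^{√r} 2λ/(λ+x⁴)^{7/8} dx) for r > 0, and let α_C > 0 be the unique solution of F(α_C,-1)=C. Then f_C(r) > -2 for all r > 0, and f_C(r) ≤ 4 if and only if r ≥ α_C. Consequently the level set {(r,x₅) ∈ (0,∞) × [-1,1] : F(r,x₅)=C} is the graph {(r, (1-f_C(r))/3) : r ≥ α_C}, homeomorphic to [α_C, ∞). -/

import Mathlib

open Real

/-- The function `F(r, x₅) = (1-3x₅)(λ+r²)^{1/8}√r + ∫₀^{√r} 2λ/(λ+x⁴)^{7/8} dx`. -/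
noncomputable def F (lam r x : ℝ) : ℝ :=
  (1 - 3 * x) * (lam + r ^ 2) ^ ((1 : ℝ) / 8) * Real.sqrt r +
    ∫ t in (0 : ℝ)..Real.sqrt r, 2 * lam / (lam + t ^ 4) ^ ((7 : ℝ) / 8)

/-- The function `f_C(r) = r^{-1/2}(λ+r²)^{-1/8}(C - ∫₀^{√r} 2λ/(λ+x⁴)^{7/8} dx)`. -/
noncomputable def fC (lam C r : ℝ) : ℝ :=
  r ^ (-(1 : ℝ) / 2) * (lam + r ^ 2) ^ (-(1 : ℝ) / 8) *
    (C - ∫ t in (0 : ℝ)..Real.sqrt r, 2 * lam / (lam + t ^ 4) ^ ((7 : ℝ) / 8))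

/-- For `C > 0`, with `α_C > 0` the unique solution of `F(α_C,-1) = C`: `f_C > -2` on
`(0,∞)`, `f_C(r) ≤ 4 ↔ r ≥ α_C`, and the level set `{F = C}` (with `r > 0`) is the graph
`{(r, (1-f_C(r))/3) : r ≥ α_C}`, homeomorphic to `[α_C, ∞)`. -/
theorem fC_level_set (lam C α : ℝ) (hlam : 0 < lam) (hC : 0 < C)
    (hα : 0 < α) (hαC : F lam α (-1) = C) :
    (∀ r : ℝ, 0 < r → -2 < fC lam C r) ∧
    (∀ r : ℝ, 0 < r → (fC lam C r ≤ 4 ↔ α ≤ r)) ∧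
    {p : ℝ × ℝ | 0 < p.1 ∧ p.2 ∈ Set.Icc (-1 : ℝ) 1 ∧ F lam p.1 p.2 = C} =
      (fun r => (r, (1 - fC lam C r) / 3)) '' Set.Ici α ∧
    Nonempty
      (({p : ℝ × ℝ | 0 < p.1 ∧ p.2 ∈ Set.Icc (-1 : ℝ) 1 ∧ F lam p.1 p.2 = C} : Set (ℝ × ℝ))
        ≃ₜ Set.Ici α) := by
  -- notation
  set φ : ℝ → ℝ := fun t => 2 * lam / (lam + t ^ 4) ^ ((7 : ℝ) / 8) with hφ
  set I : ℝ → ℝ := fun r => ∫ t in (0 : ℝ)..Real.sqrt r, φ t with hI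
  set g : ℝ → ℝ := fun r => (lam + r ^ 2) ^ ((1 : ℝ) / 8) * Real.sqrt r with hg
  have hbase : ∀ t : ℝ, (0 : ℝ) < lam + t ^ 4 := fun t => by positivity
  have hφcont : Continuous φ := by
    apply continuous_const.div
    · exact (continuous_const.add (continuous_pow 4)).rpow_const
        (fun t => Or.inl (hbase t).ne')
    · exact fun t => (Real.rpow_pos_of_pos (hbase t) _).ne'
  have hφpos : ∀ t : ℝ, 0 < φ t := fun t => by
    exact div_pos (by linarith) (Real.rpow_pos_of_pos (hbase t) _)
  have hgpos : ∀ r : ℝ, 0 < r → 0 < g r := fun r hr => by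
    exact mul_pos (Real.rpow_pos_of_pos (by positivity) _) (Real.sqrt_pos.2 hr)
  -- fC as a quotient
  have hfC : ∀ r : ℝ, 0 < r → fC lam C r = (C - I r) / g r := by
    intro r hr
    have h1 : r ^ (-(1 : ℝ) / 2) = (Real.sqrt r)⁻¹ := by
      rw [neg_div, Real.rpow_neg hr.le, Real.sqrt_eq_rpow]
    have h2 : (lam + r ^ 2) ^ (-(1 : ℝ) / 8) = ((lam + r ^ 2) ^ ((1 : ℝ) / 8))⁻¹ := by
      rw [neg_div, Real.rpow_neg (by positivity)]
    have hs : Real.sqrt r ≠ 0 := (Real.sqrt_pos.2 hr).ne'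
    have hA : (lam + r ^ 2) ^ ((1 : ℝ) / 8) ≠ 0 :=
      (Real.rpow_pos_of_pos (by positivity) _).ne'
    show r ^ (-(1 : ℝ) / 2) * (lam + r ^ 2) ^ (-(1 : ℝ) / 8) * (C - I r) = _
    rw [h1, h2, eq_div_iff (hgpos r hr).ne']
    simp only [hg]
    field_simp
  -- F rewritten
  have hFeq : ∀ r x : ℝ, F lam r x = (1 - 3 * x) * g r + I r := by
    intro r x
    show _ = (1 - 3 * x) * ((lam + r ^ 2) ^ ((1 : ℝ) / 8) * Real.sqrt r) + I r
    rw [F, mul_assoc]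
  -- key equivalence
  have hkey : ∀ r : ℝ, 0 < r → ∀ x : ℝ, (F lam r x = C ↔ 1 - 3 * x = fC lam C r) := by
    intro r hr x
    rw [hFeq, hfC r hr, eq_div_iff (hgpos r hr).ne']
    constructor <;> intro h <;> nlinarith [hgpos r hr]
  -- bound I r ≤ 2 * g r
  have hIle : ∀ r : ℝ, 0 < r → I r ≤ 2 * g r := by
    intro r hr
    have hs : (0 : ℝ) ≤ Real.sqrt r := Real.sqrt_nonneg r
    have hbd : ∀ t ∈ Set.Icc (0 : ℝ) (Real.sqrt r),
        φ t ≤ 2 * (lam + r ^ 2) ^ ((1 : ℝ) / 8) := by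
      intro t ht
      have ht4 : t ^ 4 ≤ r ^ 2 := by
        have h1 : t ^ 4 ≤ (Real.sqrt r) ^ 4 := pow_le_pow_left₀ ht.1 ht.2 4
        have h2 : (Real.sqrt r) ^ 4 = r ^ 2 := by
          rw [show (4 : ℕ) = 2 * 2 from rfl, pow_mul, Real.sq_sqrt hr.le]
        linarith
      have step1 : φ t ≤ 2 * (lam + t ^ 4) ^ ((1 : ℝ) / 8) := by
        rw [hφ, div_le_iff₀ (Real.rpow_pos_of_pos (hbase t) _)]
        have : (lam + t ^ 4) ^ ((1 : ℝ) / 8) * (lam + t ^ 4) ^ ((7 : ℝ) / 8)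
            = lam + t ^ 4 := by
          rw [← Real.rpow_add (hbase t), show (1 : ℝ) / 8 + 7 / 8 = 1 by norm_num,
            Real.rpow_one]
        rw [mul_assoc, this]
        have h4 : (0 : ℝ) ≤ t ^ 4 := by positivity
        linarith
      have step2 : (lam + t ^ 4) ^ ((1 : ℝ) / 8) ≤ (lam + r ^ 2) ^ ((1 : ℝ) / 8) :=
        Real.rpow_le_rpow (hbase t).le (by linarith) (by norm_num)
      linarith
    have hint : I r ≤ ∫ _t in (0 : ℝ)..Real.sqrt r, 2 * (lam + r ^ 2) ^ ((1 : ℝ) / 8) := by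
      apply intervalIntegral.integral_mono_on hs
        (hφcont.intervalIntegrable _ _) (intervalIntegrable_const)
      exact hbd
    rw [intervalIntegral.integral_const, smul_eq_mul, sub_zero] at hint
    rw [hg]
    nlinarith
  -- I is monotone
  have hImono : ∀ r1 r2 : ℝ, 0 < r1 → r1 ≤ r2 → I r1 ≤ I r2 := by
    intro r1 r2 hr1 h12
    have hs12 : Real.sqrt r1 ≤ Real.sqrt r2 := Real.sqrt_le_sqrt h12
    have hadd : I r1 + ∫ t in Real.sqrt r1..Real.sqrt r2, φ t = I r2 :=
      intervalIntegral.integral_add_adjacent_intervals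
        (hφcont.intervalIntegrable _ _) (hφcont.intervalIntegrable _ _)
    have hnn : 0 ≤ ∫ t in Real.sqrt r1..Real.sqrt r2, φ t :=
      intervalIntegral.integral_nonneg hs12 (fun t _ => (hφpos t).le)
    linarith
  -- F (·, -1) strictly monotone on (0, ∞)
  have hmono : StrictMonoOn (fun r => F lam r (-1)) (Set.Ioi 0) := by
    intro r1 hr1 r2 hr2 h12
    simp only [hFeq]
    have hg12 : g r1 < g r2 := by
      rw [hg]
      have hA : (lam + r1 ^ 2) ^ ((1 : ℝ) / 8) < (lam + r2 ^ 2) ^ ((1 : ℝ) / 8) := by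
        apply Real.rpow_lt_rpow (by positivity) _ (by norm_num)
        have := pow_lt_pow_left₀ h12 (le_of_lt hr1) (two_ne_zero)
        linarith
      exact mul_lt_mul'' hA (Real.sqrt_lt_sqrt (le_of_lt hr1) h12)
        (Real.rpow_pos_of_pos (by positivity) _).le (Real.sqrt_nonneg _)
    have := hImono r1 r2 hr1 h12.le
    nlinarith
  -- part 1 : fC > -2
  have part1 : ∀ r : ℝ, 0 < r → -2 < fC lam C r := by
    intro r hr
    rw [hfC r hr, lt_div_iff₀ (hgpos r hr)]
    have := hIle r hr
    nlinarith
  -- part 2 : fC ≤ 4 ↔ α ≤ r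
  have part2 : ∀ r : ℝ, 0 < r → (fC lam C r ≤ 4 ↔ α ≤ r) := by
    intro r hr
    rw [hfC r hr, div_le_iff₀ (hgpos r hr)]
    have hle : C - I r ≤ 4 * g r ↔ F lam α (-1) ≤ F lam r (-1) := by
      rw [hαC, hFeq]
      constructor <;> intro h <;> nlinarith
    rw [hle, hmono.le_iff_le hα hr]
  -- level set equality
  have hset : {p : ℝ × ℝ | 0 < p.1 ∧ p.2 ∈ Set.Icc (-1 : ℝ) 1 ∧ F lam p.1 p.2 = C} =
      (fun r => (r, (1 - fC lam C r) / 3)) '' Set.Ici α := by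
    ext p
    constructor
    · rintro ⟨hr, ⟨hx1, hx2⟩, hF⟩
      have hfx : 1 - 3 * p.2 = fC lam C p.1 := (hkey p.1 hr p.2).1 hF
      refine ⟨p.1, ?_, ?_⟩
      · have : fC lam C p.1 ≤ 4 := by linarith
        exact (part2 p.1 hr).1 this
      · have h : p.2 = (1 - fC lam C p.1) / 3 := by linarith
        show (p.1, (1 - fC lam C p.1) / 3) = p
        rw [← h]
    · rintro ⟨r, hr, rfl⟩
      have hr0 : 0 < r := lt_of_lt_of_le hα hr
      have h4 : fC lam C r ≤ 4 := (part2 r hr0).2 hr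
      have h2 : -2 < fC lam C r := part1 r hr0
      refine ⟨hr0, ⟨by dsimp; linarith, by dsimp; linarith⟩, ?_⟩
      apply (hkey r hr0 _).2
      dsimp; ring
  refine ⟨part1, part2, hset, ?_⟩
  -- continuity of fC on Ici α
  have hIcont : Continuous I :=
    (intervalIntegral.continuous_primitive
      (fun a b => hφcont.intervalIntegrable a b) 0).comp Real.continuous_sqrt
  have hfCcont : ContinuousOn (fC lam C) (Set.Ioi 0) := by
    intro r hr
    apply ContinuousAt.continuousWithinAt
    have h1 : ContinuousAt (fun r : ℝ => r ^ (-(1 : ℝ) / 2)) r :=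
      Real.continuousAt_rpow_const r _ (Or.inl (ne_of_gt hr))
    have h2 : Continuous (fun r : ℝ => (lam + r ^ 2) ^ (-(1 : ℝ) / 8)) :=
      (continuous_const.add (continuous_pow 2)).rpow_const
        (fun x => Or.inl (ne_of_gt (by positivity : (0 : ℝ) < lam + x ^ 2)))
    exact ((h1.mul h2.continuousAt).mul
      ((continuous_const.sub hIcont).continuousAt))
  have hmem : ∀ r : ℝ, α ≤ r →
      (r, (1 - fC lam C r) / 3) ∈
        {p : ℝ × ℝ | 0 < p.1 ∧ p.2 ∈ Set.Icc (-1 : ℝ) 1 ∧ F lam p.1 p.2 = C} := by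
    intro r hr
    rw [hset]
    exact ⟨r, hr, rfl⟩
  have hfst : ∀ p : ℝ × ℝ,
      p ∈ {p : ℝ × ℝ | 0 < p.1 ∧ p.2 ∈ Set.Icc (-1 : ℝ) 1 ∧ F lam p.1 p.2 = C} →
      α ≤ p.1 ∧ p.2 = (1 - fC lam C p.1) / 3 := by
    intro p hp
    rw [hset] at hp
    obtain ⟨r, hr, rfl⟩ := hp
    exact ⟨hr, rfl⟩
  refine ⟨{
    toFun := fun p => ⟨p.1.1, (hfst p.1 p.2).1⟩
    invFun := fun r => ⟨(r.1, (1 - fC lam C r.1) / 3), hmem r.1 r.2⟩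
    left_inv := by
      rintro ⟨p, hp⟩
      obtain ⟨h1, h2⟩ := hfst p hp
      ext
      · rfl
      · exact h2.symm
    right_inv := by rintro ⟨r, hr⟩; rfl
    continuous_toFun := by
      exact (continuous_fst.comp continuous_subtype_val).subtype_mk _
    continuous_invFun := by
      apply Continuous.subtype_mk
      apply Continuous.prodMk continuous_subtype_val
      have hsub : Set.Ici α ⊆ Set.Ioi (0 : ℝ) := fun x hx => lt_of_lt_of_le hα hx
      have : Continuous fun r : Set.Ici α => fC lam C r.1 :=
        continuousOn_iff_continuous_restrict.mp (hfCcont.mono hsub)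
      exact (continuous_const.sub this).div_const 3
  }⟩
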